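/- Let M be a real 2×2 matrix with determinant 1 and second row (m₁,m₂), let S = ((a,b),(c,d)) ∈ SL(2,ℝ), and let m₁' = m₁a + m₂c be the first entry of the second row of MS. Assume m₁·c·m₁' ≠ 0 and that m₁·m₁' > 0 or m₁·c < 0. Then w(M,S) = 0. -/

import Mathlib

noncomputable section
open Complex

/-- j(M,z) = cz + d for a real 2×2 matrix M = ((a,b),(c,d)). -/
def j2 (M : Matrix (Fin 2) (Fin 2) ℝ) (z : ℂ) : ℂ := (M 1 0 : ℝ) * z + (M 1 1 : ℝ)

/-- The Möbius action M⟨z⟩ = (az+b)/(cz+d). -/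
def act2 (M : Matrix (Fin 2) (Fin 2) ℝ) (z : ℂ) : ℂ :=
  ((M 0 0 : ℝ) * z + (M 0 1 : ℝ)) / ((M 1 0 : ℝ) * z + (M 1 1 : ℝ))

/-- The degree-one cocycle
w(M,N) = (1/2π)(Arg j(MN,i) - Arg j(M,N⟨i⟩) - Arg j(N,i)),
where Arg is the principal argument with values in (-π,π]. -/
def w2 (M N : Matrix (Fin 2) (Fin 2) ℝ) : ℝ :=
  ((j2 (M * N) Complex.I).arg - (j2 M (act2 N Complex.I)).arg
    - (j2 N Complex.I).arg) / (2 * Real.pi)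

/-!
The automorphy factor satisfies the cocycle relation `j(MS, i) = j(M, S⟨i⟩) · j(S, i)`, so
`w(M, S) = 0` exactly when `Arg` is additive on this product. `Arg (u v) = Arg u + Arg v` as soon
as `Im u` and `Im v` have opposite signs, or `Im u` and `Im (u v)` have the same sign. Here
`Im j(M, S⟨i⟩) = m₁ / |j(S, i)|²` has the sign of `m₁`, `Im j(S, i) = c` and `Im j(MS, i) = m₁'`.
-/

namespace Complex

lemma arg_mul_of_im_mul_neg {u v : ℂ} (h : u.im * v.im < 0) :
    (u * v).arg = u.arg + v.arg := by
  have hu : u ≠ 0 := fun hu ↦ by simp [hu] at h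
  have hv : v ≠ 0 := fun hv ↦ by simp [hv] at h
  rw [arg_mul hu hv]
  have := neg_pi_lt_arg u
  have := neg_pi_lt_arg v
  have := arg_le_pi u
  have := arg_le_pi v
  rcases mul_neg_iff.1 h with ⟨hu_pos, hv_neg⟩ | ⟨hu_neg, hv_pos⟩
  · have := arg_nonneg_iff.2 hu_pos.le
    have := arg_neg_iff.2 hv_neg
    constructor <;> linarith
  · have := arg_neg_iff.2 hu_neg
    have := arg_nonneg_iff.2 hv_pos.le
    constructor <;> linarith

-- `u * v` and `u⁻¹` have imaginary parts of opposite signs, and `arg u⁻¹ = -arg u`.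
lemma arg_mul_of_im_mul_im_mul_pos {u v : ℂ} (h : 0 < u.im * (u * v).im) :
    (u * v).arg = u.arg + v.arg := by
  have hu_im : u.im ≠ 0 := fun hu ↦ by simp [hu] at h
  have hu : u ≠ 0 := fun hu ↦ hu_im (by simp [hu])
  have h_inv : (u * v).im * u⁻¹.im < 0 := by
    rw [inv_im, neg_div, mul_neg, neg_lt_zero, mul_div_assoc', mul_comm]
    exact div_pos h (normSq_pos.2 hu)
  have h_arg_inv : u⁻¹.arg = -u.arg := by
    rw [arg_inv, if_neg fun hπ ↦ hu_im (arg_eq_pi_iff.1 hπ).2]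
  have := arg_mul_of_im_mul_neg h_inv
  rw [mul_comm u v, mul_inv_cancel_right₀ hu, h_arg_inv] at this
  rw [mul_comm u v]
  linarith

end Complex

section Automorphy

variable (M N : Matrix (Fin 2) (Fin 2) ℝ) (z : ℂ)

lemma im_j2 : (j2 M z).im = M 1 0 * z.im := by
  simp [j2]

lemma j2_ne_zero (hN : N.det ≠ 0) (hz : 0 < z.im) : j2 N z ≠ 0 := by
  intro h
  have hc : N 1 0 = 0 := by
    simpa [hz.ne'] using (im_j2 N z).symm.trans (congrArg im h)
  have hd : N 1 1 = 0 := by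
    simpa [j2, hc] using congrArg re h
  exact hN (by simp [Matrix.det_fin_two, hc, hd])

lemma im_act2 : (act2 N z).im = N.det * z.im / normSq (j2 N z) := by
  rw [act2, div_im, ← sub_div, Matrix.det_fin_two]
  congr 1
  simp only [add_im, add_re, mul_im, mul_re, ofReal_re, ofReal_im]
  ring

lemma j2_mul (hz : j2 N z ≠ 0) : j2 (M * N) z = j2 M (act2 N z) * j2 N z := by
  unfold j2 act2 at *
  rw [add_mul, mul_assoc, div_mul_cancel₀ _ hz]
  simp only [Matrix.mul_apply, Fin.sum_univ_two]
  push_cast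
  ring

end Automorphy

theorem stmt2_general (M S : Matrix (Fin 2) (Fin 2) ℝ) (hS : S.det = 1)
    (m₁ m₂ a c m₁' : ℝ)
    (hm₁ : m₁ = M 1 0) (hm₂ : m₂ = M 1 1)
    (ha : a = S 0 0) (hc : c = S 1 0)
    (hm₁' : m₁' = m₁ * a + m₂ * c)
    (hsgn : m₁ * m₁' > 0 ∨ m₁ * c < 0) :
    w2 M S = 0 := by
  have hv : j2 S I ≠ 0 := j2_ne_zero S I (by simp [hS]) (by simp)
  have hv_pos : 0 < normSq (j2 S I) := normSq_pos.2 hv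
  have hu_im : (j2 M (act2 S I)).im = m₁ / normSq (j2 S I) := by
    rw [im_j2, im_act2 S I, hS, hm₁]; simp [div_eq_mul_inv]
  have huv_im : (j2 M (act2 S I) * j2 S I).im = m₁' := by
    rw [← j2_mul M S I hv, im_j2]; simp [Matrix.mul_apply, hm₁', hm₁, hm₂, ha, hc]
  have harg : (j2 (M * S) I).arg = (j2 M (act2 S I)).arg + (j2 S I).arg := by
    rw [j2_mul M S I hv]
    rcases hsgn with h | h
    · refine arg_mul_of_im_mul_im_mul_pos ?_
      rw [hu_im, huv_im, div_mul_eq_mul_div]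
      exact div_pos h hv_pos
    · refine arg_mul_of_im_mul_neg ?_
      rw [hu_im, im_j2, ← hc, div_mul_eq_mul_div]
      simp only [I_im, mul_one]
      exact div_neg_of_neg_of_pos h hv_pos
  rw [w2, harg]
  ring

/-- if m₁·c·m₁' ≠ 0 and (m₁·m₁' > 0 or m₁·c < 0) then w(M,S) = 0. -/
theorem stmt2 (M S : Matrix (Fin 2) (Fin 2) ℝ) (hM : M.det = 1) (hS : S.det = 1)
    (m₁ m₂ a b c d m₁' : ℝ)
    (hm₁ : m₁ = M 1 0) (hm₂ : m₂ = M 1 1)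
    (ha : a = S 0 0) (hb : b = S 0 1) (hc : c = S 1 0) (hd : d = S 1 1)
    (hm₁' : m₁' = m₁ * a + m₂ * c)
    (hne : m₁ * c * m₁' ≠ 0) (hsgn : m₁ * m₁' > 0 ∨ m₁ * c < 0) :
    w2 M S = 0 :=
  stmt2_general M S hS m₁ m₂ a c m₁' hm₁ hm₂ ha hc hm₁' hsgn
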